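/- Let J_z = diag(1, 0, −1) and J_x = (1/√2)·[[0,1,0],[1,0,1],[0,1,0]] be the standard spin-1 angular momentum matrices along the z and x axes. Then for every 3×3 density matrix ρ, with V(X) = Tr[ρX²] − (Tr[ρX])², one has [2 − V(J_x) − 3V(J_x²)] · [2 − V(J_z) − 3V(J_z²)] ≤ 25/8 − 1/√2. -/

import Mathlib

/-!
For an observable `J` with spectrum `{-1, 0, 1}`, so that `J² * J² = J²`, the quantity
`2 - V(J) - 3 V(J²)` equals `2 - 4⟨J²⟩ + 3⟨J²⟩² + ⟨J⟩² = 2 ∑ qᵢ²`, twice the collision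
probability of the outcome distribution `q` of `J`. Rather than the entropic bound we prove the
additive bound `∑ qᵢ(J_z)² + ∑ qᵢ(J_x)² ≤ 3/2`, which needs only two Cauchy–Schwarz inequalities
for the positive semidefinite form `vᴴ ρ w`. By AM–GM the product of the two factors is then at
most `9/4`, which is below `25/8 - 1/√2 ≈ 2.418`.
-/

open Matrix ComplexOrder

noncomputable def Jz : Matrix (Fin 3) (Fin 3) ℂ := !![1, 0, 0; 0, 0, 0; 0, 0, -1]

noncomputable def Jx : Matrix (Fin 3) (Fin 3) ℂ :=
  ((Real.sqrt 2 : ℂ))⁻¹ • !![0, 1, 0; 1, 0, 1; 0, 1, 0]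

section PositiveSemidefinite

variable {𝕜 n : Type*} [RCLike 𝕜] {A : Matrix n n 𝕜}

theorem Matrix.IsHermitian.re_apply_swap (hA : A.IsHermitian) (i j : n) :
    RCLike.re (A j i) = RCLike.re (A i j) := by
  rw [← hA.apply i j, RCLike.star_def, RCLike.conj_re]

theorem Matrix.IsHermitian.apply_add_apply_swap (hA : A.IsHermitian) (i j : n) :
    A i j + A j i = 2 * (RCLike.re (A i j) : 𝕜) := by
  rw [← hA.apply j i, RCLike.star_def, RCLike.add_conj]

variable [Fintype n]

theorem Matrix.IsHermitian.star_dotProduct_mulVec_swap (hA : A.IsHermitian) (v w : n → 𝕜) :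
    star w ⬝ᵥ A *ᵥ v = star (star v ⬝ᵥ A *ᵥ w) := by
  rw [star_dotProduct, star_mulVec, hA.eq, ← dotProduct_mulVec]

theorem Matrix.PosSemidef.re_dotProduct_mulVec_sq_le (hA : A.PosSemidef) (v w : n → 𝕜) :
    RCLike.re (star v ⬝ᵥ A *ᵥ w) ^ 2 ≤
      RCLike.re (star v ⬝ᵥ A *ᵥ v) * RCLike.re (star w ⬝ᵥ A *ᵥ w) := by
  have hquad (t : ℝ) : 0 ≤ RCLike.re (star w ⬝ᵥ A *ᵥ w) * (t * t)
      + 2 * RCLike.re (star v ⬝ᵥ A *ᵥ w) * t + RCLike.re (star v ⬝ᵥ A *ᵥ v) := by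
    convert (RCLike.nonneg_iff.1 (hA.dotProduct_mulVec_nonneg (v + (t : 𝕜) • w))).1 using 1
    simp only [star_add, star_smul, RCLike.star_def, RCLike.conj_ofReal, mulVec_add, mulVec_smul,
      dotProduct_add, add_dotProduct, dotProduct_smul, smul_dotProduct,
      hA.1.star_dotProduct_mulVec_swap v w, smul_eq_mul, map_add, RCLike.re_ofReal_mul,
      RCLike.conj_re]
    ring
  have hdiscrim := discrim_le_zero hquad
  rw [discrim] at hdiscrim
  linarith

variable [DecidableEq n]

theorem Matrix.PosSemidef.re_apply_sq_le (hA : A.PosSemidef) (i j : n) :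
    RCLike.re (A i j) ^ 2 ≤ RCLike.re (A i i) * RCLike.re (A j j) := by
  simpa using hA.re_dotProduct_mulVec_sq_le (Pi.single i 1) (Pi.single j 1)

theorem Matrix.PosSemidef.re_add_apply_sq_le (hA : A.PosSemidef) (i j k : n) :
    (RCLike.re (A i k) + RCLike.re (A j k)) ^ 2 ≤
      (RCLike.re (A i i) + RCLike.re (A j j) + 2 * RCLike.re (A i j)) * RCLike.re (A k k) := by
  have h := hA.re_dotProduct_mulVec_sq_le (Pi.single i 1 + Pi.single j 1) (Pi.single k 1)
  simp only [star_add, Pi.star_single, star_one, add_dotProduct, mulVec_add, dotProduct_add,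
    single_one_dotProduct, mulVec_single_one, col_apply, map_add, hA.1.re_apply_swap i j] at h
  convert h using 2
  ring

end PositiveSemidefinite

def twiceCollision (m j : ℝ) : ℝ := 2 - 4 * m + 3 * m ^ 2 + j ^ 2

theorem twiceCollision_pos (m j : ℝ) : 0 < twiceCollision m j := by
  unfold twiceCollision
  nlinarith [sq_nonneg (3 * m - 2), sq_nonneg j]

theorem twiceCollision_mul_le_of_add_le_three {m j m' j' : ℝ}
    (h : twiceCollision m j + twiceCollision m' j' ≤ 3) :
    twiceCollision m j * twiceCollision m' j' ≤ 9 / 4 := by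
  nlinarith [four_mul_le_sq_add (twiceCollision m j) (twiceCollision m' j'),
    twiceCollision_pos m j, twiceCollision_pos m' j']

theorem two_sub_variance_sub_three_mul_variance_sq {n : Type*} [Fintype n]
    {ρ J : Matrix n n ℂ} (hJ : J * J * (J * J) = J * J) {m j V V₂ : ℝ}
    (hm : (ρ * (J * J)).trace = m) (hj : (ρ * J).trace = j)
    (hV : (ρ * (J * J)).trace - (ρ * J).trace ^ 2 = V)
    (hV₂ : (ρ * (J * J * (J * J))).trace - (ρ * (J * J)).trace ^ 2 = V₂) :
    2 - V - 3 * V₂ = twiceCollision m j := by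
  rw [hm, hj] at hV
  rw [hJ, hm] at hV₂
  have hV' : V = m - j ^ 2 := by exact_mod_cast hV.symm
  have hV₂' : V₂ = m - m ^ 2 := by exact_mod_cast hV₂.symm
  rw [twiceCollision, hV', hV₂']
  ring

-- With `pᵢ = Re ρᵢᵢ`, `r = Re ρ₀₂` and `s = Re (ρ₀₁ + ρ₂₁)`, the arguments of the two
-- `twiceCollision`s are `⟨J_x²⟩, ⟨J_x⟩` and `⟨J_z²⟩, ⟨J_z⟩`.
theorem twiceCollision_add_twiceCollision_le_three {p₀ p₁ p₂ r s : ℝ}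
    (h₀ : 0 ≤ p₀) (h₁ : 0 ≤ p₁) (h₂ : 0 ≤ p₂) (hsum : p₀ + p₁ + p₂ = 1)
    (hr : r ^ 2 ≤ p₀ * p₂) (hs : s ^ 2 ≤ (p₀ + p₂ + 2 * r) * p₁) :
    twiceCollision ((p₀ + p₂) / 2 + r + p₁) (√2 * s) +
      twiceCollision (p₀ + p₂) (p₀ - p₂) ≤ 3 := by
  have hr' : 2 * r ≤ p₀ + p₂ := by nlinarith [sq_nonneg (p₀ - p₂)]
  obtain rfl : p₁ = 1 - (p₀ + p₂) := by linarith
  unfold twiceCollision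
  rw [mul_pow, Real.sq_sqrt zero_le_two]
  linear_combination 4 * hr + 2 * hs + 3 * mul_nonneg (sub_nonneg.2 hr') h₁ +
    sq_nonneg (p₀ + p₂ + 2 * r) / 4

section SpinOne

theorem Jz_mul_Jz : Jz * Jz = !![1, 0, 0; 0, 0, 0; 0, 0, 1] := by
  ext i j; fin_cases i <;> fin_cases j <;> simp [Jz, mul_apply, Fin.sum_univ_three]

theorem ofReal_sqrt_two_mul_self : ((√2 : ℝ) : ℂ) * (√2 : ℝ) = 2 := by
  rw [← Complex.ofReal_mul, Real.mul_self_sqrt zero_le_two, Complex.ofReal_ofNat]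

theorem Jx_mul_Jx : Jx * Jx = (2⁻¹ : ℂ) • !![1, 0, 1; 0, 2, 0; 1, 0, 1] := by
  rw [Jx, smul_mul_smul_comm, ← mul_inv, ofReal_sqrt_two_mul_self]
  congr 1
  ext i j; fin_cases i <;> fin_cases j <;> simp [mul_apply, Fin.sum_univ_three, one_add_one_eq_two]

theorem Jz_sq_mul_Jz_sq : Jz * Jz * (Jz * Jz) = Jz * Jz := by
  rw [Jz_mul_Jz]; ext i j; fin_cases i <;> fin_cases j <;> simp

theorem Jx_sq_mul_Jx_sq : Jx * Jx * (Jx * Jx) = Jx * Jx := by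
  rw [Jx_mul_Jx, smul_mul_smul_comm]
  ext i j; fin_cases i <;> fin_cases j <;> norm_num [mul_apply, Fin.sum_univ_three]

variable (ρ : Matrix (Fin 3) (Fin 3) ℂ)

theorem trace_mul_Jz : (ρ * Jz).trace = ρ 0 0 - ρ 2 2 := by
  simp [Jz, trace_fin_three, mul_apply, Fin.sum_univ_three, ← sub_eq_add_neg]

theorem trace_mul_Jz_sq : (ρ * (Jz * Jz)).trace = ρ 0 0 + ρ 2 2 := by
  simp [Jz_mul_Jz, trace_fin_three, mul_apply, Fin.sum_univ_three]

theorem trace_mul_Jx : (ρ * Jx).trace = (√2 : ℂ)⁻¹ * (ρ 0 1 + ρ 1 0 + ρ 1 2 + ρ 2 1) := by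
  rw [Jx, Matrix.mul_smul, trace_smul, smul_eq_mul]
  simp [trace_fin_three, mul_apply, Fin.sum_univ_three, add_assoc]

theorem trace_mul_Jx_sq :
    (ρ * (Jx * Jx)).trace = 2⁻¹ * (ρ 0 0 + ρ 0 2 + 2 * ρ 1 1 + ρ 2 0 + ρ 2 2) := by
  rw [Jx_mul_Jx, Matrix.mul_smul, trace_smul, smul_eq_mul]
  simp [trace_fin_three, mul_apply, Fin.sum_univ_three, add_assoc, mul_comm _ (2 : ℂ)]

variable {ρ}

theorem trace_mul_Jz_of_isHermitian (hρ : ρ.IsHermitian) :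
    (ρ * Jz).trace = ((ρ 0 0).re - (ρ 2 2).re : ℝ) := by
  have h₀ : ((ρ 0 0).re : ℂ) = ρ 0 0 := hρ.coe_re_apply_self 0
  have h₂ : ((ρ 2 2).re : ℂ) = ρ 2 2 := hρ.coe_re_apply_self 2
  rw [trace_mul_Jz, Complex.ofReal_sub, h₀, h₂]

theorem trace_mul_Jz_sq_of_isHermitian (hρ : ρ.IsHermitian) :
    (ρ * (Jz * Jz)).trace = ((ρ 0 0).re + (ρ 2 2).re : ℝ) := by
  have h₀ : ((ρ 0 0).re : ℂ) = ρ 0 0 := hρ.coe_re_apply_self 0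
  have h₂ : ((ρ 2 2).re : ℂ) = ρ 2 2 := hρ.coe_re_apply_self 2
  rw [trace_mul_Jz_sq, Complex.ofReal_add, h₀, h₂]

theorem trace_mul_Jx_of_isHermitian (hρ : ρ.IsHermitian) :
    (ρ * Jx).trace = (√2 * ((ρ 0 1).re + (ρ 2 1).re) : ℝ) := by
  have h₀₁ : ρ 0 1 + ρ 1 0 = 2 * ((ρ 0 1).re : ℂ) := hρ.apply_add_apply_swap 0 1
  have h₂₁ : ρ 2 1 + ρ 1 2 = 2 * ((ρ 2 1).re : ℂ) := hρ.apply_add_apply_swap 2 1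
  rw [trace_mul_Jx, inv_mul_eq_iff_eq_mul₀ (by simp)]
  push_cast
  linear_combination h₀₁ + h₂₁ - ((ρ 0 1).re + (ρ 2 1).re : ℂ) * ofReal_sqrt_two_mul_self

theorem trace_mul_Jx_sq_of_isHermitian (hρ : ρ.IsHermitian) :
    (ρ * (Jx * Jx)).trace = (((ρ 0 0).re + (ρ 2 2).re) / 2 + (ρ 0 2).re + (ρ 1 1).re : ℝ) := by
  have h₀ : ((ρ 0 0).re : ℂ) = ρ 0 0 := hρ.coe_re_apply_self 0
  have h₁ : ((ρ 1 1).re : ℂ) = ρ 1 1 := hρ.coe_re_apply_self 1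
  have h₂ : ((ρ 2 2).re : ℂ) = ρ 2 2 := hρ.coe_re_apply_self 2
  have h₀₂ : ρ 0 2 + ρ 2 0 = 2 * ((ρ 0 2).re : ℂ) := hρ.apply_add_apply_swap 0 2
  rw [trace_mul_Jx_sq]
  push_cast
  rw [h₀, h₁, h₂]
  linear_combination h₀₂ / 2

end SpinOne

/-- Eq. (29): the variance-based uncertainty relation for the spin-1 angular momentum
components `J_x` and `J_z`:
`[2 − V(J_x) − 3V(J_x²)][2 − V(J_z) − 3V(J_z²)] ≤ 25/8 − 1/√2`. -/
theorem spin1_Jx_Jz_variance_uncertainty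
    (ρ : Matrix (Fin 3) (Fin 3) ℂ)
    (hρ : ρ.PosSemidef) (hρtr : ρ.trace = 1)
    (Vx Vx2 Vz Vz2 : ℝ)
    (hVx : (ρ * (Jx * Jx)).trace - ((ρ * Jx).trace) ^ 2 = (Vx : ℂ))
    (hVx2 : (ρ * ((Jx * Jx) * (Jx * Jx))).trace - ((ρ * (Jx * Jx)).trace) ^ 2 = (Vx2 : ℂ))
    (hVz : (ρ * (Jz * Jz)).trace - ((ρ * Jz).trace) ^ 2 = (Vz : ℂ))
    (hVz2 : (ρ * ((Jz * Jz) * (Jz * Jz))).trace - ((ρ * (Jz * Jz)).trace) ^ 2 = (Vz2 : ℂ)) :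
    (2 - Vx - 3 * Vx2) * (2 - Vz - 3 * Vz2) ≤ 25 / 8 - 1 / Real.sqrt 2 := by
  rw [two_sub_variance_sub_three_mul_variance_sq Jx_sq_mul_Jx_sq
      (trace_mul_Jx_sq_of_isHermitian hρ.1) (trace_mul_Jx_of_isHermitian hρ.1) hVx hVx2,
    two_sub_variance_sub_three_mul_variance_sq Jz_sq_mul_Jz_sq
      (trace_mul_Jz_sq_of_isHermitian hρ.1) (trace_mul_Jz_of_isHermitian hρ.1) hVz hVz2]
  have hdiag (i : Fin 3) : 0 ≤ (ρ i i).re := (Complex.nonneg_iff.1 hρ.diag_nonneg).1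
  have htrace : (ρ 0 0).re + (ρ 1 1).re + (ρ 2 2).re = 1 := by
    simpa [trace_fin_three] using congrArg Complex.re hρtr
  have hsum := twiceCollision_add_twiceCollision_le_three (hdiag 0) (hdiag 1) (hdiag 2) htrace
    (hρ.re_apply_sq_le 0 2) (hρ.re_add_apply_sq_le 0 2 1)
  have hsqrt_two : 8 / 7 ≤ √2 := Real.le_sqrt_of_sq_le (by norm_num)
  have hconst : (9 : ℝ) / 4 ≤ 25 / 8 - 1 / √2 := by
    rw [le_sub_comm, one_div_le (by positivity) (by norm_num)]
    linarith
  exact (twiceCollision_mul_le_of_add_le_three hsum).trans hconst
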